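/- Let P_Z and P_X⁰ be Borel probability measures on ℝ^{d_Z} and ℝ^{d_X} with non-homeomorphic supports, and let ρ be a metric for the weak topology. Then there exists a nonincreasing function M : [0,∞) → [1,∞] with M(ε) → ∞ as ε → 0 such that for any probability measure P_X* on ℝ^{d_X} and any measurable f, if ρ(P_X*, P_X⁰) ≤ ε and ρ(f♯P_Z, P_X*) ≤ ε, then BiLip f ≥ M(ε). -/

import Mathlib

open Set ENNReal Filter MeasureTheory Topology

noncomputable section

/-- The support of a Borel measure: points all of whose open neighbourhoods
have positive measure. -/
def msupp {X : Type*} [TopologicalSpace X] [MeasurableSpace X] (μ : Measure X) : Set X :=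
  {z | ∀ N : Set X, IsOpen N → z ∈ N → 0 < μ N}

/-- The bi-Lipschitz constant of `f`: the infimum over `M ∈ [1,∞]` such that
`M⁻¹ * edist a b ≤ edist (f a) (f b) ≤ M * edist a b` for all `a, b`. -/
noncomputable def eBiLip {α β : Type*} [PseudoEMetricSpace α] [PseudoEMetricSpace β]
    (f : α → β) : ℝ≥0∞ :=
  sInf {M : ℝ≥0∞ | 1 ≤ M ∧ ∀ a b,
    edist a b / M ≤ edist (f a) (f b) ∧ edist (f a) (f b) ≤ M * edist a b}

/-!
Take `M ε` to be the infimum of `eBiLip f` over the maps admissible at level `ε`. If it stayed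
below some finite `C` as `ε → 0`, there would be `C`-bi-Lipschitz maps `fₙ` with `fₙ♯P_Z → P_X⁰`
weakly (the triangle inequality for `ρ` glues the two `ε`-approximations). Weak convergence is
tight, which keeps `fₙ z₀` bounded, so Arzelà–Ascoli gives a subsequence converging to a
`C`-bi-Lipschitz `g` with `g♯P_Z = P_X⁰`. A bi-Lipschitz map on a complete space is a closed
embedding, and a closed embedding maps the support of a measure onto the support of its
pushforward; so the two supports would be homeomorphic.
-/

open scoped NNReal BoundedContinuousFunction

section Support

variable {X Y : Type*} [TopologicalSpace X] [MeasurableSpace X]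

lemma msupp_eq_support (μ : Measure X) : msupp μ = μ.support := by
  rw [Measure.support_eq_forall_isOpen]
  exact Set.ext fun _ => forall_congr' fun _ => Imp.swap

variable [OpensMeasurableSpace X] [HereditarilyLindelofSpace X]
  [TopologicalSpace Y] [MeasurableSpace Y] [BorelSpace Y]

lemma MeasureTheory.Measure.support_map_of_isClosedEmbedding {g : X → Y}
    (hg : IsClosedEmbedding g) (μ : Measure X) : (μ.map g).support = g '' μ.support := by
  have hgm := hg.continuous.measurable
  have hclosed := hg.isClosedMap _ (Measure.isClosed_support (μ := μ))
  refine subset_antisymm (Measure.support_subset_of_isClosed hclosed ?_) ?_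
  · rw [mem_ae_iff, Measure.map_apply hgm hclosed.isOpen_compl.measurableSet, preimage_compl,
      hg.injective.preimage_image, Measure.measure_compl_support]
  · rintro _ ⟨z, hz, rfl⟩
    rw [Measure.mem_support_iff_forall] at hz ⊢
    exact fun U hU => (hz _ (hg.continuous.continuousAt hU)).trans_le
      (Measure.le_map_apply hgm.aemeasurable U)

lemma nonempty_homeomorph_support_map {g : X → Y} (hg : IsClosedEmbedding g) (μ : Measure X) :
    Nonempty (μ.support ≃ₜ (μ.map g).support) :=
  ⟨(hg.isEmbedding.homeomorphImage _).trans
    (Homeomorph.setCongr (μ.support_map_of_isClosedEmbedding hg).symm)⟩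

end Support

section BiLipschitz

variable {α β : Type*} [PseudoEMetricSpace α] [PseudoEMetricSpace β]

lemma one_le_eBiLip (f : α → β) : 1 ≤ eBiLip f :=
  le_sInf fun _ hM => hM.1

lemma lipschitzWith_and_antilipschitzWith_of_eBiLip_lt {f : α → β} {K : ℝ≥0}
    (h : eBiLip f < K) : LipschitzWith K f ∧ AntilipschitzWith K f := by
  obtain ⟨M, ⟨hM1, hM⟩, hMK⟩ := sInf_lt_iff.mp h
  refine ⟨fun a b => (hM a b).2.trans (by gcongr), fun a b => ?_⟩
  calc edist a b ≤ M * edist (f a) (f b) := by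
        rw [mul_comm]
        exact (ENNReal.div_le_iff (one_pos.trans_le hM1).ne' hMK.ne_top).mp (hM a b).1
    _ ≤ K * edist (f a) (f b) := by gcongr

lemma isClosed_setOfPred_antilipschitzWith (K : ℝ≥0) :
    IsClosed {f : α → β | AntilipschitzWith K f} := by
  simp only [AntilipschitzWith, ofPred_forall]
  exact isClosed_iInter fun x => isClosed_iInter fun y => isClosed_le continuous_const
    ((ENNReal.continuous_const_mul coe_ne_top).comp
      ((continuous_apply x).edist (continuous_apply y)))

end BiLipschitz

lemma exists_lt_measure_ball {Ω : Type*} [PseudoMetricSpace Ω] [MeasurableSpace Ω]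
    (μ : Measure Ω) (x : Ω) {b : ℝ≥0∞} (hb : b < μ univ) :
    ∃ R : ℕ, b < μ (Metric.ball x R) := by
  have hlim := tendsto_measure_iUnion_atTop (μ := μ) (s := fun R : ℕ => Metric.ball x R)
    (fun _ _ h => Metric.ball_subset_ball (Nat.cast_le.mpr h))
  rw [Metric.iUnion_ball_nat] at hlim
  exact (hlim.eventually (eventually_gt_nhds hb)).exists

lemma eventually_lt_measure_of_tendsto_integral {Ω ι : Type*} [MeasurableSpace Ω]
    [TopologicalSpace Ω] [OpensMeasurableSpace Ω] [HasOuterApproxClosed Ω] {L : Filter ι}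
    {μs : ι → Measure Ω} [∀ i, IsProbabilityMeasure (μs i)]
    {ν : Measure Ω} [IsProbabilityMeasure ν]
    (h : ∀ f : Ω →ᵇ ℝ, Tendsto (fun i => ∫ x, f x ∂μs i) L (𝓝 (∫ x, f x ∂ν)))
    {G : Set Ω} (hG : IsOpen G) {b : ℝ≥0∞} (hb : b < ν G) : ∀ᶠ i in L, b < μs i G := by
  have hlim := ProbabilityMeasure.tendsto_iff_forall_integral_tendsto
    (μs := fun i => ⟨μs i, inferInstance⟩) (μ := ⟨ν, inferInstance⟩) |>.mpr h
  exact eventually_lt_of_lt_liminf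
    (hb.trans_le (ProbabilityMeasure.le_liminf_measure_open_of_tendsto hlim hG))

section Pushforward

variable {E F : Type*} [MeasurableSpace E] [MeasurableSpace F] {μ : Measure E}
  [IsProbabilityMeasure μ] {ν : Measure F} [IsProbabilityMeasure ν]

lemma exists_eventually_dist_le_of_tendsto_integral [PseudoMetricSpace E]
    [OpensMeasurableSpace E] [PseudoMetricSpace F] [BorelSpace F] {K : ℝ≥0} {f : ℕ → E → F}
    (hf : ∀ n, LipschitzWith K (f n))
    (hconv : ∀ h : F →ᵇ ℝ, Tendsto (fun n => ∫ x, h x ∂(μ.map (f n))) atTop (𝓝 (∫ x, h x ∂ν)))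
    (z₀ : E) (x₀ : F) : ∃ B, ∀ᶠ n in atTop, dist (f n z₀) x₀ ≤ B := by
  have half_lt : (2⁻¹ : ℝ≥0∞) < 1 := ENNReal.inv_lt_one.mpr one_lt_two
  obtain ⟨R, hR⟩ := exists_lt_measure_ball ν x₀ (half_lt.trans_eq measure_univ.symm)
  obtain ⟨T, hT⟩ := exists_lt_measure_ball μ z₀ (half_lt.trans_eq measure_univ.symm)
  have hprob n := Measure.isProbabilityMeasure_map (μ := μ) (hf n).continuous.aemeasurable
  refine ⟨K * T + R, ?_⟩
  filter_upwards [eventually_lt_measure_of_tendsto_integral hconv Metric.isOpen_ball hR]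
    with n hn
  rw [Measure.map_apply (hf n).continuous.measurable measurableSet_ball] at hn
  -- both sets carry more than half of `μ`, so they meet
  obtain ⟨z, hzR, hzT⟩ := nonempty_inter_of_measure_lt_add μ (s := f n ⁻¹' Metric.ball x₀ R)
    (measurableSet_ball (x := z₀) (ε := T)) (subset_univ _) (subset_univ _) (by
      rw [measure_univ]
      exact ENNReal.inv_two_add_inv_two.symm.trans_lt (ENNReal.add_lt_add hn hT))
  calc dist (f n z₀) x₀ ≤ dist (f n z₀) (f n z) + dist (f n z) x₀ := dist_triangle _ _ _
    _ ≤ K * dist z₀ z + R := add_le_add ((hf n).dist_le_mul _ _) hzR.le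
    _ ≤ K * T + R := by
      rw [dist_comm]
      gcongr
      exact hzT.le

lemma map_eq_of_tendsto_integral [TopologicalSpace F] [BorelSpace F] [HasOuterApproxClosed F]
    {f : ℕ → E → F} (hf : ∀ n, Measurable (f n)) {g : E → F} (hg : Measurable g)
    (hfg : Tendsto f atTop (𝓝 g))
    (hconv : ∀ h : F →ᵇ ℝ, Tendsto (fun n => ∫ x, h x ∂(μ.map (f n))) atTop (𝓝 (∫ x, h x ∂ν))) :
    μ.map g = ν := by
  have := Measure.isProbabilityMeasure_map (μ := μ) hg.aemeasurable
  refine ext_of_forall_integral_eq_of_IsFiniteMeasure fun h => tendsto_nhds_unique ?_ (hconv h)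
  have integral_map_eq {k : E → F} (hk : Measurable k) :
      ∫ x, h x ∂(μ.map k) = ∫ z, h (k z) ∂μ :=
    integral_map hk.aemeasurable h.continuous.aestronglyMeasurable
  simp only [integral_map_eq (hf _), integral_map_eq hg]
  exact tendsto_integral_of_dominated_convergence (fun _ => ‖h‖)
    (fun n => (h.continuous.measurable.comp (hf n)).aestronglyMeasurable) (integrable_const _)
    (fun n => ae_of_all _ fun z => h.norm_coe_le_norm _)
    (ae_of_all _ fun z => (h.continuous.tendsto _).comp (tendsto_pi_nhds.mp hfg z))

end Pushforward

section ProperSpaces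

variable {E F : Type*} [MetricSpace E] [ProperSpace E] [MetricSpace F] [ProperSpace F]

lemma exists_subseq_tendsto_of_lipschitzWith {K : ℝ≥0} {f : ℕ → E → F}
    (hf : ∀ n, LipschitzWith K (f n)) {z₀ : E} {x₀ : F} {B : ℝ}
    (hB : ∀ᶠ n in atTop, dist (f n z₀) x₀ ≤ B) :
    ∃ g : E → F, ∃ φ : ℕ → ℕ, StrictMono φ ∧ Tendsto (f ∘ φ) atTop (𝓝 g) := by
  set T : Set (E → F) := {h | LipschitzWith K h ∧ dist (h z₀) x₀ ≤ B}
  set S : Set C(E, F) := {h | LipschitzWith K h ∧ dist (h z₀) x₀ ≤ B}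
  have hT : IsCompact T := by
    refine (isCompact_univ_pi fun z => isCompact_closedBall x₀ (K * dist z z₀ + B))
      |>.of_isClosed_subset ((isClosed_setOfPred_lipschitzWith K).inter
        (isClosed_le ((continuous_apply z₀).dist continuous_const) continuous_const)) ?_
    rintro h ⟨hh, hhB⟩ z -
    calc dist (h z) x₀ ≤ dist (h z) (h z₀) + dist (h z₀) x₀ := dist_triangle _ _ _
      _ ≤ K * dist z z₀ + B := add_le_add (hh.dist_le_mul _ _) hhB
  have hST : ContinuousMap.toFun '' S = T :=
    subset_antisymm (image_subset_iff.mpr fun _ hh => hh)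
      fun h hh => ⟨⟨h, hh.1.continuous⟩, hh, rfl⟩
  have hS : IsCompact S := ArzelaAscoli.isCompact_of_equicontinuous S (hST ▸ hT)
    (LipschitzWith.uniformEquicontinuous _ K fun h => h.2.1).equicontinuous
  obtain ⟨g, -, φ, hφ, hg⟩ := hS.tendsto_subseq' (x := fun n => ⟨f n, (hf n).continuous⟩)
    (hB.mono fun n hn => ⟨hf n, hn⟩).frequently
  exact ⟨g, φ, hφ, (continuous_coeFun.tendsto g).comp hg⟩

variable [MeasurableSpace E] [BorelSpace E] [MeasurableSpace F] [BorelSpace F]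

theorem nonempty_homeomorph_support_of_tendsto_integral {μ : Measure E} [IsProbabilityMeasure μ]
    {ν : Measure F} [IsProbabilityMeasure ν] {K : ℝ≥0} {f : ℕ → E → F}
    (hlip : ∀ n, LipschitzWith K (f n)) (hanti : ∀ n, AntilipschitzWith K (f n))
    (hconv : ∀ h : F →ᵇ ℝ, Tendsto (fun n => ∫ x, h x ∂(μ.map (f n))) atTop (𝓝 (∫ x, h x ∂ν))) :
    Nonempty (μ.support ≃ₜ ν.support) := by
  obtain ⟨z₀⟩ := nonempty_of_isProbabilityMeasure μ
  obtain ⟨B, hB⟩ := exists_eventually_dist_le_of_tendsto_integral hlip hconv z₀ (f 0 z₀)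
  obtain ⟨g, φ, hφ, hfg⟩ := exists_subseq_tendsto_of_lipschitzWith hlip hB
  have hg_lip : LipschitzWith K g := (isClosed_setOfPred_lipschitzWith K).mem_of_tendsto hfg
    (Eventually.of_forall fun n => hlip (φ n))
  have hg_anti : AntilipschitzWith K g := (isClosed_setOfPred_antilipschitzWith K).mem_of_tendsto
    hfg (Eventually.of_forall fun n => hanti (φ n))
  have hmap : μ.map g = ν :=
    map_eq_of_tendsto_integral (fun n => (hlip (φ n)).continuous.measurable)
      hg_lip.continuous.measurable hfg fun h => (hconv h).comp hφ.tendsto_atTop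
  exact hmap ▸ nonempty_homeomorph_support_map
    (hg_anti.isClosedEmbedding hg_lip.uniformContinuous) μ

end ProperSpaces

lemma tendsto_biInf_nhdsGT_zero_top {α : Type*} {A : ℝ → Set α} (hA : Monotone A)
    (c : α → ℝ≥0∞) (h : ∀ C : ℝ≥0, ∃ ε > 0, ∀ a ∈ A ε, (C : ℝ≥0∞) ≤ c a) :
    Tendsto (fun ε => ⨅ a ∈ A ε, c a) (𝓝[>] 0) (𝓝 ⊤) := by
  refine ENNReal.tendsto_nhds_top_iff_nnreal.mpr fun b => ?_
  obtain ⟨ε, hε, hc⟩ := h (b + 1)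
  filter_upwards [Ioc_mem_nhdsGT hε] with x hx
  calc (b : ℝ≥0∞) < (b + 1 : ℝ≥0) := by exact_mod_cast lt_add_one b
    _ ≤ ⨅ a ∈ A ε, c a := le_iInf₂ hc
    _ ≤ ⨅ a ∈ A x, c a := biInf_mono (hA hx.2)

theorem stmt8_general {dZ dX : ℕ}
    (PZ : Measure (EuclideanSpace ℝ (Fin dZ)))
    (PX0 : Measure (EuclideanSpace ℝ (Fin dX)))
    [IsProbabilityMeasure PZ] [IsProbabilityMeasure PX0]
    (hne : ¬ Nonempty (↥(msupp PZ) ≃ₜ ↥(msupp PX0)))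
    (ρ : Measure (EuclideanSpace ℝ (Fin dX)) → Measure (EuclideanSpace ℝ (Fin dX)) → ℝ)
    (hρ_nonneg : ∀ μ ν, 0 ≤ ρ μ ν)
    (hρ_tri : ∀ μ ν ξ, ρ μ ξ ≤ ρ μ ν + ρ ν ξ)
    (hρ_weak : ∀ (μ : ℕ → Measure (EuclideanSpace ℝ (Fin dX)))
        (ν : Measure (EuclideanSpace ℝ (Fin dX))),
        (∀ n, IsProbabilityMeasure (μ n)) → IsProbabilityMeasure ν →
        (Tendsto (fun n => ρ (μ n) ν) atTop (nhds 0) ↔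
          ∀ h : BoundedContinuousFunction (EuclideanSpace ℝ (Fin dX)) ℝ,
            Tendsto (fun n => ∫ x, h x ∂(μ n)) atTop (nhds (∫ x, h x ∂ν)))) :
    ∃ M : ℝ → ℝ≥0∞,
      AntitoneOn M (Set.Ici 0) ∧
      (∀ ε : ℝ, 0 ≤ ε → 1 ≤ M ε) ∧
      Tendsto M (nhdsWithin 0 (Set.Ioi 0)) (nhds ⊤) ∧
      ∀ ε : ℝ, 0 ≤ ε → ∀ PXstar : Measure (EuclideanSpace ℝ (Fin dX)),
        IsProbabilityMeasure PXstar →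
        ∀ f : EuclideanSpace ℝ (Fin dZ) → EuclideanSpace ℝ (Fin dX), Measurable f →
        ρ PXstar PX0 ≤ ε → ρ (PZ.map f) PXstar ≤ ε → M ε ≤ eBiLip f := by
  set A : ℝ → Set (EuclideanSpace ℝ (Fin dZ) → EuclideanSpace ℝ (Fin dX)) := fun ε =>
    {f | Measurable f ∧ ∃ Q, IsProbabilityMeasure Q ∧ ρ Q PX0 ≤ ε ∧ ρ (PZ.map f) Q ≤ ε}
  have hA : Monotone A := fun ε ε' hε f ⟨hf, Q, hQ, h₁, h₂⟩ =>
    ⟨hf, Q, hQ, h₁.trans hε, h₂.trans hε⟩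
  have key (C : ℝ≥0) : ∃ ε > 0, ∀ f ∈ A ε, (C : ℝ≥0∞) ≤ eBiLip f := by
    by_contra! hC
    choose f hfA hfC using fun n : ℕ => hC (1 / (n + 1)) Nat.one_div_pos_of_nat
    have hprob n := Measure.isProbabilityMeasure_map (μ := PZ) (hfA n).1.aemeasurable
    refine hne ?_
    rw [msupp_eq_support, msupp_eq_support]
    refine nonempty_homeomorph_support_of_tendsto_integral
      (fun n => (lipschitzWith_and_antilipschitzWith_of_eBiLip_lt (hfC n)).1)
      (fun n => (lipschitzWith_and_antilipschitzWith_of_eBiLip_lt (hfC n)).2)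
      ((hρ_weak _ _ hprob inferInstance).mp ?_)
    refine squeeze_zero (fun n => hρ_nonneg _ _) (fun n => ?_)
      (mul_zero (2 : ℝ) ▸ tendsto_one_div_add_atTop_nhds_zero_nat.const_mul 2)
    obtain ⟨-, Q, -, h₁, h₂⟩ := hfA n
    linarith [hρ_tri (PZ.map (f n)) Q PX0]
  refine ⟨fun ε => ⨅ f ∈ A ε, eBiLip f, fun ε _ ε' _ hε => biInf_mono (hA hε),
    fun _ _ => le_iInf₂ fun f _ => one_le_eBiLip f, tendsto_biInf_nhdsGT_zero_top hA _ key,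
    fun ε _ Q hQ f hf h₁ h₂ => iInf₂_le f ⟨hf, Q, hQ, h₁, h₂⟩⟩

/-- If the target is close (in a metric `ρ` for the weak topology) to a measure whose support
is not homeomorphic to that of the prior, and the pushforward model is close to the target,
then the bi-Lipschitz constant of the pushforward map is bounded below by a quantity
`M ε` which diverges as `ε → 0`. -/
theorem stmt8 {dZ dX : ℕ}
    (PZ : Measure (EuclideanSpace ℝ (Fin dZ)))
    (PX0 : Measure (EuclideanSpace ℝ (Fin dX)))
    [IsProbabilityMeasure PZ] [IsProbabilityMeasure PX0]
    (hne : ¬ Nonempty (↥(msupp PZ) ≃ₜ ↥(msupp PX0)))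
    (ρ : Measure (EuclideanSpace ℝ (Fin dX)) → Measure (EuclideanSpace ℝ (Fin dX)) → ℝ)
    (hρ_nonneg : ∀ μ ν, 0 ≤ ρ μ ν)
    (hρ_symm : ∀ μ ν, ρ μ ν = ρ ν μ)
    (hρ_tri : ∀ μ ν ξ, ρ μ ξ ≤ ρ μ ν + ρ ν ξ)
    (hρ_weak : ∀ (μ : ℕ → Measure (EuclideanSpace ℝ (Fin dX)))
        (ν : Measure (EuclideanSpace ℝ (Fin dX))),
        (∀ n, IsProbabilityMeasure (μ n)) → IsProbabilityMeasure ν →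
        (Tendsto (fun n => ρ (μ n) ν) atTop (nhds 0) ↔
          ∀ h : BoundedContinuousFunction (EuclideanSpace ℝ (Fin dX)) ℝ,
            Tendsto (fun n => ∫ x, h x ∂(μ n)) atTop (nhds (∫ x, h x ∂ν)))) :
    ∃ M : ℝ → ℝ≥0∞,
      AntitoneOn M (Set.Ici 0) ∧
      (∀ ε : ℝ, 0 ≤ ε → 1 ≤ M ε) ∧
      Tendsto M (nhdsWithin 0 (Set.Ioi 0)) (nhds ⊤) ∧
      ∀ ε : ℝ, 0 ≤ ε → ∀ PXstar : Measure (EuclideanSpace ℝ (Fin dX)),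
        IsProbabilityMeasure PXstar →
        ∀ f : EuclideanSpace ℝ (Fin dZ) → EuclideanSpace ℝ (Fin dX), Measurable f →
        ρ PXstar PX0 ≤ ε → ρ (PZ.map f) PXstar ≤ ε → M ε ≤ eBiLip f :=
  stmt8_general PZ PX0 hne ρ hρ_nonneg hρ_tri hρ_weak
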